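/- arXiv:1611.04274 — 2 statements merged into one kernel-verified Lean document; each statement's English description precedes it below -/
import Mathlib

section
/- (Corollary 2.9) Let R be a 2-torsion free unital prime ring containing a nontrivial idempotent P (P² = P, P ≠ 0, P ≠ 1). If φ : R → R is an additive map satisfying condition (P), then there exist a derivation δ : R → R and a multiplier η : R → R such that φ = δ + η. If in addition φ(1) = 0, then φ is a derivation. -/
/-!
Condition (P) survives subtracting a derivation or a multiplication by a central element.
Write `q = 1 - P`. Subtracting the inner derivation `[q φ(P) P - P φ(P) q, -]` moves `φ(P)` into
`P R P` and then `φ(q)` into `q R q`; the orthogonal pair `(P - m, q + m)` with `m ∈ P R q` gives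
`φ(P) m = m φ(q)`, and primeness turns this into centrality of `φ(1) = φ(P) + φ(q)`. After also
subtracting `x ↦ φ(1) x` we are left with a map `ψ` satisfying (P) and vanishing at `P` and `q`.
Such a `ψ` maps every Peirce corner into itself, so `ψ(e x f) = e ψ(x) f`, and the Leibniz rule
can be checked on products of corners: on `P R P · P R q` through the orthogonal pair
`(q + m, v - v m)`, on `P R P · P R P` through primeness, and on `P R q · q R P` by applying
`ψ(E) = E ψ(E) + ψ(E) E` to the idempotent `E = (1 + m)(P + n)(1 - m)`.
-/

section

variable {R : Type*} [Ring R]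

/-- Condition (P). -/
def IsJordanDerivableOnOrthogonal (φ : R →+ R) : Prop :=
  ∀ U V : R, U * V = 0 → V * U = 0 → φ U * V + V * φ U + U * φ V + φ V * U = 0

def innerDerivation (T : R) : R →+ R := AddMonoidHom.mulLeft T - AddMonoidHom.mulRight T

@[simp] lemma innerDerivation_apply (T x : R) : innerDerivation T x = T * x - x * T := rfl

lemma innerDerivation_mul (T a b : R) :
    innerDerivation T (a * b) = innerDerivation T a * b + a * innerDerivation T b := by
  simp only [innerDerivation_apply]; noncomm_ring

lemma IsIdempotentElem.mul_eq_zero_of_mul_add_mul_eq_zero {e X : R} (he : IsIdempotentElem e)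
    (h2 : ∀ a : R, a + a = 0 → a = 0) (h : e * X + X * e = 0) : e * X = 0 ∧ X * e = 0 := by
  have hl : e * X + e * X * e = 0 := by
    linear_combination (norm := noncomm_ring) e * h - he.eq * X
  have hr : e * X * e + X * e = 0 := by
    linear_combination (norm := noncomm_ring) h * e - X * he.eq
  have hm : e * X * e = 0 := h2 _ (by
    linear_combination (norm := noncomm_ring) e * h * e - he.eq * X * e - e * X * he.eq)
  exact ⟨by simpa [hm] using hl, by simpa [hm] using hr⟩

namespace IsJordanDerivableOnOrthogonal

variable {φ ψ : R →+ R}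

lemma sub (hφ : IsJordanDerivableOnOrthogonal φ) (hψ : IsJordanDerivableOnOrthogonal ψ) :
    IsJordanDerivableOnOrthogonal (φ - ψ) := by
  intro U V h₁ h₂
  simp only [AddMonoidHom.sub_apply]
  linear_combination (norm := noncomm_ring) hφ U V h₁ h₂ - hψ U V h₁ h₂

lemma of_derivation (hψ : ∀ a b, ψ (a * b) = ψ a * b + a * ψ b) :
    IsJordanDerivableOnOrthogonal ψ := by
  intro U V h₁ h₂
  have e₁ := hψ U V
  have e₂ := hψ V U
  rw [h₁, map_zero] at e₁
  rw [h₂, map_zero] at e₂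
  linear_combination (norm := noncomm_ring) -e₁ - e₂

lemma mulLeft_of_commute {z : R} (hz : ∀ r, z * r = r * z) :
    IsJordanDerivableOnOrthogonal (AddMonoidHom.mulLeft z) := by
  intro U V h₁ h₂
  simp only [AddMonoidHom.coe_mulLeft]
  linear_combination (norm := noncomm_ring)
    z * h₁ + z * h₂ + V * hz U + U * hz V + h₂ * z + h₁ * z

lemma map_mul_add_mul_map_of_sq_eq_zero (hφ : IsJordanDerivableOnOrthogonal φ)
    (h2 : ∀ a : R, a + a = 0 → a = 0) {x : R} (hx : x * x = 0) :
    φ x * x + x * φ x = 0 :=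
  h2 _ (by linear_combination (norm := noncomm_ring) hφ x x hx hx)

lemma map_idempotent (hφ : IsJordanDerivableOnOrthogonal φ)
    (h2 : ∀ a : R, a + a = 0 → a = 0) (h1 : φ 1 = 0) {E : R} (hE : IsIdempotentElem E) :
    φ E = E * φ E + φ E * E := by
  have h := hφ E (1 - E) (by rw [mul_sub, mul_one, hE.eq, sub_self])
    (by rw [sub_mul, one_mul, hE.eq, sub_self])
  rw [map_sub, h1] at h
  have h' := h2 (φ E - E * φ E - φ E * E) (by linear_combination (norm := noncomm_ring) h)
  linear_combination (norm := noncomm_ring) h'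

lemma mul_map_eq_zero_of_orthogonal (hφ : IsJordanDerivableOnOrthogonal φ)
    (h2 : ∀ a : R, a + a = 0 → a = 0) {e x : R} (he : IsIdempotentElem e) (hφe : φ e = 0)
    (h₁ : e * x = 0) (h₂ : x * e = 0) : e * φ x = 0 ∧ φ x * e = 0 :=
  he.mul_eq_zero_of_mul_add_mul_eq_zero h2 (by simpa [hφe] using hφ e x h₁ h₂)

end IsJordanDerivableOnOrthogonal

structure PeircePair (R : Type*) [Ring R] where
  p : R
  q : R
  add_eq_one : p + q = 1
  mul_eq_zero : p * q = 0

namespace PeircePair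

variable (e : PeircePair R)

@[simp] lemma p_mul_q : e.p * e.q = 0 := e.mul_eq_zero

@[simp] lemma p_mul_p : e.p * e.p = e.p := by
  simpa [mul_add] using congrArg (e.p * ·) e.add_eq_one

@[simp] lemma q_mul_p : e.q * e.p = 0 := by
  have h := congrArg (· * e.p) e.add_eq_one
  simpa only [add_mul, p_mul_p, one_mul, add_eq_left] using h

def swap : PeircePair R := ⟨e.q, e.p, by rw [add_comm, e.add_eq_one], e.q_mul_p⟩

@[simp] lemma swap_p : e.swap.p = e.q := rfl
@[simp] lemma swap_q : e.swap.q = e.p := rfl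

@[simp] lemma q_mul_q : e.q * e.q = e.q := e.swap.p_mul_p

@[simp] lemma p_mul_p_mul (t : R) : e.p * (e.p * t) = e.p * t := by rw [← mul_assoc, p_mul_p]
@[simp] lemma p_mul_q_mul (t : R) : e.p * (e.q * t) = 0 := by rw [← mul_assoc, p_mul_q, zero_mul]
@[simp] lemma q_mul_p_mul (t : R) : e.q * (e.p * t) = 0 := e.swap.p_mul_q_mul t
@[simp] lemma q_mul_q_mul (t : R) : e.q * (e.q * t) = e.q * t := e.swap.p_mul_p_mul t

lemma isIdempotentElem_p : IsIdempotentElem e.p := e.p_mul_p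

lemma sum_corners (x : R) : e.p * x * e.p + e.p * x * e.q + e.q * x * e.p + e.q * x * e.q = x := by
  have h : (e.p + e.q) * x * (e.p + e.q) = x := by rw [e.add_eq_one, one_mul, mul_one]
  conv_rhs => rw [← h]
  noncomm_ring

lemma p_mul_mul_q_eq_self {F : R} (h₁ : e.q * F = 0) (h₂ : F * e.p = 0) :
    e.p * F * e.q = F := by
  linear_combination (norm := noncomm_ring) e.sum_corners F - e.p * h₂ - h₁ * e.p - h₁ * e.q

lemma p_mul_mul_p_eq_self {F : R} (h₁ : e.q * F = 0) (h₂ : F * e.q = 0) :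
    e.p * F * e.p = F := by
  linear_combination (norm := noncomm_ring) e.sum_corners F - e.p * h₂ - h₁ * e.p - h₁ * e.q

variable {φ : R →+ R}

lemma mul_map_pp_corner_eq_zero (hφ : IsJordanDerivableOnOrthogonal φ)
    (h2 : ∀ a : R, a + a = 0 → a = 0)
    (hq : φ e.q = 0) (x : R) :
    e.q * φ (e.p * x * e.p) = 0 ∧ φ (e.p * x * e.p) * e.q = 0 :=
  hφ.mul_map_eq_zero_of_orthogonal h2 e.swap.isIdempotentElem_p hq (by simp [mul_assoc])
    (by simp [mul_assoc])

lemma map_pq_corner_diag_eq_zero (hφ : IsJordanDerivableOnOrthogonal φ)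
    (h2 : ∀ a : R, a + a = 0 → a = 0)
    (hp : φ e.p = 0) (hq : φ e.q = 0) (x : R) :
    e.p * φ (e.p * x * e.q) * e.p = 0 ∧ e.q * φ (e.p * x * e.q) * e.q = 0 := by
  have H := hφ (e.p - e.p * x * e.q) (e.q + e.p * x * e.q) (by simp [sub_mul, mul_add, mul_assoc])
    (by simp [mul_sub, add_mul, mul_assoc])
  have A := hφ.map_mul_add_mul_map_of_sq_eq_zero h2 (x := e.p * x * e.q) (by simp [mul_assoc])
  rw [map_sub, map_add, hp, hq] at H
  have Hp := congrArg (e.p * · * e.p) H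
  have Ap := congrArg (e.p * · * e.p) A
  have Hq := congrArg (e.q * · * e.q) H
  have Aq := congrArg (e.q * · * e.q) A
  simp only [mul_add, add_mul, mul_sub, sub_mul, mul_neg, neg_mul, mul_assoc, p_mul_p, p_mul_q,
    q_mul_p, q_mul_q, p_mul_p_mul, p_mul_q_mul, q_mul_p_mul, q_mul_q_mul, mul_zero, zero_mul,
    zero_sub, sub_zero, add_zero, zero_add, neg_zero] at Hp Ap Hq Aq ⊢
  exact ⟨h2 _ (by linear_combination (norm := noncomm_ring) Hp + 2 * Ap),
    h2 _ (by linear_combination (norm := noncomm_ring) -Hq - 2 * Aq)⟩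

lemma qp_part_map_pp_mul_pq (hφ : IsJordanDerivableOnOrthogonal φ)
    (h2 : ∀ a : R, a + a = 0 → a = 0) (hq : φ e.q = 0) (x y : R) :
    e.q * φ (e.p * y * e.p * (e.p * x * e.q)) * e.p
      = e.q * φ (e.p * x * e.q) * (e.p * y * e.p) := by
  have H := hφ (e.q + e.p * x * e.q) (e.p * y * e.p - e.p * y * e.p * (e.p * x * e.q))
    (by simp [add_mul, mul_sub, mul_assoc]) (by simp [sub_mul, mul_add, mul_assoc])
  have hv := (e.mul_map_pp_corner_eq_zero hφ h2 hq y).1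
  rw [map_sub, map_add, hq] at H
  have Hqp := congrArg (e.q * · * e.p) H
  simp only [mul_add, add_mul, mul_sub, sub_mul, mul_assoc, p_mul_p, q_mul_p, p_mul_p_mul,
    q_mul_p_mul, q_mul_q_mul, mul_zero, zero_mul, sub_zero, add_zero, zero_add] at Hqp hv ⊢
  linear_combination (norm := noncomm_ring) -Hqp + hv * e.p

lemma qp_part_map_pq_eq_zero (hφ : IsJordanDerivableOnOrthogonal φ)
    (h2 : ∀ a : R, a + a = 0 → a = 0)
    (hprime : ∀ a b : R, (∀ r : R, a * r * b = 0) → a = 0 ∨ b = 0)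
    (hq : φ e.q = 0) (x : R) : e.q * φ (e.p * x * e.q) * e.p = 0 := by
  -- polarize `φ m * m + m * φ m = 0` and put `m' = (p r p) m`: then `q φ(m) p * R * m = 0`
  have hsq : ∀ z, e.q * φ (e.p * z * e.q) * (e.p * z * e.q) = 0 := fun z => by
    simpa [mul_add, add_mul, mul_assoc] using
      congrArg (e.q * · * e.q) (hφ.map_mul_add_mul_map_of_sq_eq_zero h2 (x := e.p * z * e.q)
        (by simp [mul_assoc]))
  have hpol : ∀ z, e.q * φ (e.p * x * e.q) * (e.p * z * e.q)
      + e.q * φ (e.p * z * e.q) * (e.p * x * e.q) = 0 := fun z => by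
    have := hsq (x + z)
    simp only [mul_add, add_mul, map_add] at this
    linear_combination (norm := noncomm_ring) this - hsq x - hsq z
  have hr : ∀ r, e.q * φ (e.p * x * e.q) * e.p * r * (e.p * x * e.q) = 0 := fun r => by
    have h1 := hpol (r * e.p * x)
    have hv := e.qp_part_map_pp_mul_pq hφ h2 hq x r
    simp only [mul_assoc, p_mul_p_mul] at h1 hv ⊢
    exact h2 _ (by linear_combination (norm := noncomm_ring) h1 - hv * (x * e.q))
  rcases hprime _ _ hr with h | h
  · exact h
  · rw [h, map_zero, mul_zero, zero_mul]

lemma mul_map_pq_corner_eq_zero (hφ : IsJordanDerivableOnOrthogonal φ)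
    (h2 : ∀ a : R, a + a = 0 → a = 0)
    (hprime : ∀ a b : R, (∀ r : R, a * r * b = 0) → a = 0 ∨ b = 0)
    (hp : φ e.p = 0) (hq : φ e.q = 0) (x : R) :
    e.q * φ (e.p * x * e.q) = 0 ∧ φ (e.p * x * e.q) * e.p = 0 := by
  have hd := e.map_pq_corner_diag_eq_zero hφ h2 hp hq x
  have hqp := e.qp_part_map_pq_eq_zero hφ h2 hprime hq x
  constructor
  · linear_combination (norm := noncomm_ring)
      hqp + hd.2 - (e.q * φ (e.p * x * e.q)) * e.add_eq_one
  · linear_combination (norm := noncomm_ring)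
      hd.1 + hqp - e.add_eq_one * (φ (e.p * x * e.q) * e.p)

lemma map_corners (hφ : IsJordanDerivableOnOrthogonal φ)
    (h2 : ∀ a : R, a + a = 0 → a = 0)
    (hprime : ∀ a b : R, (∀ r : R, a * r * b = 0) → a = 0 ∨ b = 0)
    (hp : φ e.p = 0) (hq : φ e.q = 0) (x : R) :
    φ (e.p * x * e.p) = e.p * φ x * e.p ∧ φ (e.p * x * e.q) = e.p * φ x * e.q := by
  have hx := congrArg φ (e.sum_corners x)
  simp only [map_add] at hx
  have hpp := e.mul_map_pp_corner_eq_zero hφ h2 hq x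
  have hpq := e.mul_map_pq_corner_eq_zero hφ h2 hprime hp hq x
  have hqp := e.swap.mul_map_pq_corner_eq_zero hφ h2 hprime hq hp x
  have hqq := e.swap.mul_map_pp_corner_eq_zero hφ h2 hp x
  simp only [swap_p, swap_q] at hqp hqq
  rw [← hx]
  constructor
  · linear_combination (norm := noncomm_ring) -(e.p_mul_mul_p_eq_self hpp.1 hpp.2) - e.p * hpq.2
      - hqp.1 * e.p - hqq.1 * e.p
  · linear_combination (norm := noncomm_ring) -(e.p_mul_mul_q_eq_self hpq.1 hpq.2) - e.p * hpp.2
      - hqp.1 * e.q - hqq.1 * e.q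

end PeircePair

def LeibnizAt (φ : R →+ R) (a b c : R) : Prop :=
  ∀ u v : R, a * φ (u * b * v) * c = a * φ u * b * v * c + a * u * b * φ v * c

namespace PeircePair

variable (e : PeircePair R) {φ : R →+ R}

lemma leibnizAt_p_p_q (hφ : IsJordanDerivableOnOrthogonal φ)
    (h2 : ∀ a : R, a + a = 0 → a = 0)
    (hprime : ∀ a b : R, (∀ r : R, a * r * b = 0) → a = 0 ∨ b = 0)
    (hp : φ e.p = 0) (hq : φ e.q = 0) : LeibnizAt φ e.p e.p e.q := by
  intro u v
  have hc := e.map_corners hφ h2 hprime hp hq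
  have H := hφ (e.q + e.p * v * e.q) (e.p * u * e.p - e.p * u * e.p * (e.p * v * e.q))
    (by simp [add_mul, mul_sub, mul_assoc]) (by simp [sub_mul, mul_add, mul_assoc])
  have hprod : e.p * u * e.p * (e.p * v * e.q) = e.p * (u * e.p * v) * e.q := by simp [mul_assoc]
  rw [hprod, map_add, map_sub, hq, (hc v).2, (hc u).1, (hc _).2] at H
  have Hpq := congrArg (e.p * · * e.q) H
  simp only [mul_add, add_mul, mul_sub, sub_mul, mul_neg, neg_mul, mul_assoc, p_mul_q, q_mul_q,
    p_mul_p_mul, q_mul_p_mul, mul_zero, zero_mul, zero_sub, sub_zero, add_zero, zero_add] at Hpq ⊢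
  linear_combination (norm := noncomm_ring) -Hpq

lemma leibnizAt_p_q_q (hφ : IsJordanDerivableOnOrthogonal φ)
    (h2 : ∀ a : R, a + a = 0 → a = 0)
    (hprime : ∀ a b : R, (∀ r : R, a * r * b = 0) → a = 0 ∨ b = 0)
    (hp : φ e.p = 0) (hq : φ e.q = 0) : LeibnizAt φ e.p e.q e.q := by
  intro u v
  have hc := e.map_corners hφ h2 hprime hp hq
  have hc' := e.swap.map_corners hφ h2 hprime hq hp
  simp only [swap_p, swap_q] at hc'
  have H := hφ (e.p + e.p * u * e.q) (e.q * v * e.q - e.p * u * e.q * (e.q * v * e.q))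
    (by simp [add_mul, mul_sub, mul_assoc]) (by simp [sub_mul, mul_add, mul_assoc])
  have hprod : e.p * u * e.q * (e.q * v * e.q) = e.p * (u * e.q * v) * e.q := by simp [mul_assoc]
  rw [hprod, map_add, map_sub, hp, (hc u).2, (hc' v).1, (hc _).2] at H
  have Hpq := congrArg (e.p * · * e.q) H
  simp only [mul_add, add_mul, mul_sub, sub_mul, mul_assoc, q_mul_p, q_mul_q, p_mul_p_mul,
    p_mul_q_mul, q_mul_p_mul, q_mul_q_mul, mul_zero, zero_mul, sub_zero, add_zero,
    zero_add] at Hpq ⊢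
  linear_combination (norm := noncomm_ring) -Hpq

lemma leibnizAt_p_p_p (hφ : IsJordanDerivableOnOrthogonal φ)
    (h2 : ∀ a : R, a + a = 0 → a = 0)
    (hprime : ∀ a b : R, (∀ r : R, a * r * b = 0) → a = 0 ∨ b = 0)
    (hp : φ e.p = 0) (hq : φ e.q = 0) (hq0 : e.q ≠ 0) : LeibnizAt φ e.p e.p e.p := by
  intro u v
  have L := e.leibnizAt_p_p_q hφ h2 hprime hp hq
  have key : ∀ r, (e.p * φ (u * e.p * v) * e.p - e.p * φ u * e.p * v * e.p
      - e.p * u * e.p * φ v * e.p) * r * e.q = 0 := fun r => by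
    have h1 := L u (v * e.p * r)
    have h3 := L (u * e.p * v) r
    simp only [mul_assoc] at h1 h3 ⊢
    linear_combination (norm := noncomm_ring) h1 - h3 + (e.p * u) * L v r
  rcases hprime _ _ key with h | h
  · linear_combination (norm := noncomm_ring) h
  · exact absurd h hq0

lemma pqp_defect_add_mul_eq_zero (hφ : IsJordanDerivableOnOrthogonal φ)
    (h2 : ∀ a : R, a + a = 0 → a = 0)
    (hprime : ∀ a b : R, (∀ r : R, a * r * b = 0) → a = 0 ∨ b = 0)
    (hp : φ e.p = 0) (hq : φ e.q = 0) (u v : R) :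
    (e.p * φ (u * e.q * v) * e.p - e.p * φ u * e.q * v * e.p - e.p * u * e.q * φ v * e.p)
      + e.p * u * e.q * v * e.p * (e.p * φ (u * e.q * v) * e.p - e.p * φ u * e.q * v * e.p
        - e.p * u * e.q * φ v * e.p) = 0 := by
  have hc := e.map_corners hφ h2 hprime hp hq
  have hc' := e.swap.map_corners hφ h2 hprime hq hp
  simp only [swap_p, swap_q] at hc'
  have h1 : φ 1 = 0 := by rw [← e.add_eq_one, map_add, hp, hq, add_zero]
  -- `E = (1 + m) (p + n) (1 - m)` with `m = p u q` and `n = q v p`, expanded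
  set E := e.p + e.q * v * e.p + e.p * (u * e.q * v) * e.p - e.p * u * e.q
    - e.q * (v * e.p * u) * e.q - e.p * (u * e.q * v * e.p * u) * e.q with hEdef
  have hE : IsIdempotentElem E := by
    rw [IsIdempotentElem, hEdef]
    simp only [mul_add, add_mul, mul_sub, sub_mul, mul_assoc, p_mul_p, q_mul_p, p_mul_p_mul,
      p_mul_q_mul, q_mul_p_mul, q_mul_q_mul, mul_zero]
    abel
  have H := hφ.map_idempotent h2 h1 hE
  rw [hEdef] at H
  simp only [map_add, map_sub, hp, (hc _).1, (hc _).2, (hc' _).1, (hc' _).2] at H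
  have Hpp := congrArg (e.p * · * e.p) H
  have L := e.leibnizAt_p_p_q hφ h2 hprime hp hq (u * e.q * v) u
  simp only [mul_add, add_mul, mul_sub, sub_mul, mul_neg, neg_mul, mul_assoc, p_mul_p, q_mul_p,
    p_mul_p_mul, p_mul_q_mul, q_mul_p_mul, q_mul_q_mul, mul_zero, zero_sub, sub_zero, add_zero,
    zero_add] at Hpp L ⊢
  linear_combination (norm := noncomm_ring) -Hpp + L * (v * e.p)

lemma leibnizAt_p_q_p (hφ : IsJordanDerivableOnOrthogonal φ)
    (h2 : ∀ a : R, a + a = 0 → a = 0)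
    (hprime : ∀ a b : R, (∀ r : R, a * r * b = 0) → a = 0 ∨ b = 0)
    (hp : φ e.p = 0) (hq : φ e.q = 0) : LeibnizAt φ e.p e.q e.p := by
  intro u v
  -- the defect is additive in `u`, whereas `p u q v p` changes sign with `u`
  have h := e.pqp_defect_add_mul_eq_zero hφ h2 hprime hp hq u v
  have h' := e.pqp_defect_add_mul_eq_zero hφ h2 hprime hp hq (-u) v
  simp only [map_neg, neg_mul, mul_neg] at h'
  have hX := h2
    (e.p * φ (u * e.q * v) * e.p - e.p * φ u * e.q * v * e.p - e.p * u * e.q * φ v * e.p)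
    (by linear_combination (norm := noncomm_ring) h - h')
  linear_combination (norm := noncomm_ring) hX

lemma map_mul_of_leibnizAt
    (h : ∀ a ∈ ({e.p, e.q} : Set R), ∀ b ∈ ({e.p, e.q} : Set R),
      ∀ c ∈ ({e.p, e.q} : Set R), LeibnizAt φ a b c) (u v : R) :
    φ (u * v) = φ u * v + u * φ v := by
  -- with `q = 1 - p` the eight compressed identities add up to the Leibniz rule
  have hq : e.q = 1 - e.p := eq_sub_of_add_eq' e.add_eq_one
  have L : ∀ a ∈ ({e.p, 1 - e.p} : Set R), ∀ b ∈ ({e.p, 1 - e.p} : Set R),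
      ∀ c ∈ ({e.p, 1 - e.p} : Set R), LeibnizAt φ a b c := hq ▸ h
  have L₁ := L _ (.inl rfl) _ (.inl rfl) _ (.inl rfl) u v
  have L₂ := L _ (.inl rfl) _ (.inl rfl) _ (.inr rfl) u v
  have L₃ := L _ (.inl rfl) _ (.inr rfl) _ (.inl rfl) u v
  have L₄ := L _ (.inl rfl) _ (.inr rfl) _ (.inr rfl) u v
  have L₅ := L _ (.inr rfl) _ (.inl rfl) _ (.inl rfl) u v
  have L₆ := L _ (.inr rfl) _ (.inl rfl) _ (.inr rfl) u v
  have L₇ := L _ (.inr rfl) _ (.inr rfl) _ (.inl rfl) u v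
  have L₈ := L _ (.inr rfl) _ (.inr rfl) _ (.inr rfl) u v
  simp only [mul_sub, sub_mul, mul_one, one_mul, map_sub] at L₂ L₃ L₄ L₅ L₆ L₇ L₈
  linear_combination (norm := noncomm_ring) L₁ + L₂ + L₃ + L₄ + L₅ + L₆ + L₇ + L₈

theorem map_mul_of_map_eq_zero (hφ : IsJordanDerivableOnOrthogonal φ)
    (h2 : ∀ a : R, a + a = 0 → a = 0)
    (hprime : ∀ a b : R, (∀ r : R, a * r * b = 0) → a = 0 ∨ b = 0)
    (hp : φ e.p = 0) (hq : φ e.q = 0) (hp0 : e.p ≠ 0) (hq0 : e.q ≠ 0) (u v : R) :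
    φ (u * v) = φ u * v + u * φ v := by
  refine e.map_mul_of_leibnizAt ?_ u v
  rintro a (rfl | rfl) b (rfl | rfl) c (rfl | rfl)
  · exact e.leibnizAt_p_p_p hφ h2 hprime hp hq hq0
  · exact e.leibnizAt_p_p_q hφ h2 hprime hp hq
  · exact e.leibnizAt_p_q_p hφ h2 hprime hp hq
  · exact e.leibnizAt_p_q_q hφ h2 hprime hp hq
  · exact e.swap.leibnizAt_p_q_q hφ h2 hprime hq hp
  · exact e.swap.leibnizAt_p_q_p hφ h2 hprime hq hp
  · exact e.swap.leibnizAt_p_p_q hφ h2 hprime hq hp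
  · exact e.swap.leibnizAt_p_p_p hφ h2 hprime hq hp hp0

lemma q_mul_map_p_mul_q (hφ : IsJordanDerivableOnOrthogonal φ)
    (h2 : ∀ a : R, a + a = 0 → a = 0) :
    e.q * φ e.p * e.q = 0 := by
  have H := congrArg (e.q * · * e.q) (hφ e.p e.q e.p_mul_q e.q_mul_p)
  simp only [mul_add, add_mul, mul_assoc, p_mul_q, q_mul_q, q_mul_p_mul, q_mul_q_mul, mul_zero,
    zero_mul, add_zero] at H
  exact h2 _ (by simpa only [mul_assoc] using H)

lemma exists_innerDerivation_map_p_eq (hφ : IsJordanDerivableOnOrthogonal φ)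
    (h2 : ∀ a : R, a + a = 0 → a = 0) :
    ∃ T : R, (φ - innerDerivation T) e.p = e.p * (φ - innerDerivation T) e.p * e.p := by
  refine ⟨e.q * φ e.p * e.p - e.p * φ e.p * e.q, ?_⟩
  have h := e.q_mul_map_p_mul_q hφ h2
  simp only [AddMonoidHom.sub_apply, innerDerivation_apply, mul_sub, sub_mul, mul_neg, neg_mul,
    mul_assoc, p_mul_p, q_mul_p, p_mul_p_mul, p_mul_q_mul, mul_zero, sub_zero, zero_sub] at h ⊢
  linear_combination (norm := noncomm_ring) h - e.sum_corners (φ e.p)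

lemma map_q_eq_of_map_p_eq (hφ : IsJordanDerivableOnOrthogonal φ)
    (h2 : ∀ a : R, a + a = 0 → a = 0) (ha : φ e.p = e.p * φ e.p * e.p) :
    φ e.q = e.q * φ e.q * e.q := by
  have H := hφ e.p e.q e.p_mul_q e.q_mul_p
  rw [ha] at H
  simp only [mul_assoc, p_mul_q, q_mul_p_mul, mul_zero, zero_add] at H
  have h := e.isIdempotentElem_p.mul_eq_zero_of_mul_add_mul_eq_zero h2 H
  exact (e.swap.p_mul_mul_p_eq_self h.1 h.2).symm

lemma map_p_mul_pq_corner (hφ : IsJordanDerivableOnOrthogonal φ)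
    (h2 : ∀ a : R, a + a = 0 → a = 0) (ha : φ e.p = e.p * φ e.p * e.p)
    (hb : φ e.q = e.q * φ e.q * e.q) (x : R) :
    φ e.p * (e.p * x * e.q) = e.p * x * e.q * φ e.q := by
  have H := hφ (e.p - e.p * x * e.q) (e.q + e.p * x * e.q) (by simp [sub_mul, mul_add, mul_assoc])
    (by simp [mul_sub, add_mul, mul_assoc])
  have A := hφ.map_mul_add_mul_map_of_sq_eq_zero h2 (x := e.p * x * e.q) (by simp [mul_assoc])
  rw [map_sub, map_add, ha, hb] at H
  have Hpq := congrArg (e.p * · * e.q) H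
  have Apq := congrArg (e.p * · * e.q) A
  simp only [mul_add, add_mul, mul_sub, sub_mul, mul_neg, neg_mul, mul_assoc, p_mul_q, q_mul_p,
    q_mul_q, p_mul_p_mul, p_mul_q_mul, q_mul_p_mul, q_mul_q_mul, mul_zero, zero_mul, zero_sub,
    add_zero, zero_add] at Hpq Apq
  rw [ha, hb]
  simp only [mul_assoc, p_mul_p_mul, q_mul_q_mul]
  linear_combination (norm := noncomm_ring) Hpq + 2 * Apq

lemma map_p_mul_pp_corner_comm (hφ : IsJordanDerivableOnOrthogonal φ)
    (h2 : ∀ a : R, a + a = 0 → a = 0)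
    (hprime : ∀ a b : R, (∀ r : R, a * r * b = 0) → a = 0 ∨ b = 0)
    (ha : φ e.p = e.p * φ e.p * e.p) (hb : φ e.q = e.q * φ e.q * e.q) (hq0 : e.q ≠ 0)
    (y : R) :
    φ e.p * (e.p * y * e.p) = e.p * y * e.p * φ e.p := by
  have key : ∀ r, (φ e.p * (e.p * y * e.p) - e.p * y * e.p * φ e.p) * r * e.q = 0 := fun r => by
    have h1 := e.map_p_mul_pq_corner hφ h2 ha hb (y * e.p * r)
    have h3 := e.map_p_mul_pq_corner hφ h2 ha hb r
    rw [ha] at h1 h3 ⊢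
    simp only [mul_assoc, p_mul_p_mul] at h1 h3 ⊢
    linear_combination (norm := noncomm_ring) h1 - (e.p * y) * h3
  rcases hprime _ _ key with h | h
  · exact sub_eq_zero.mp h
  · exact absurd h hq0

lemma map_one_mul_comm (hφ : IsJordanDerivableOnOrthogonal φ)
    (h2 : ∀ a : R, a + a = 0 → a = 0)
    (hprime : ∀ a b : R, (∀ r : R, a * r * b = 0) → a = 0 ∨ b = 0)
    (ha : φ e.p = e.p * φ e.p * e.p) (hp0 : e.p ≠ 0) (hq0 : e.q ≠ 0) (r : R) :
    φ 1 * r = r * φ 1 := by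
  have hb := e.map_q_eq_of_map_p_eq hφ h2 ha
  have F₁ := e.map_p_mul_pp_corner_comm hφ h2 hprime ha hb hq0 r
  have F₂ := e.map_p_mul_pq_corner hφ h2 ha hb r
  have F₃ := e.swap.map_p_mul_pq_corner hφ h2 hb ha r
  have F₄ := e.swap.map_p_mul_pp_corner_comm hφ h2 hprime hb ha hp0 r
  simp only [swap_p, swap_q] at F₃ F₄
  rw [← e.add_eq_one, map_add]
  conv_lhs => rw [← e.sum_corners r]
  conv_rhs => rw [← e.sum_corners r]
  rw [ha] at F₁ F₂ F₃ ⊢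
  rw [hb] at F₂ F₃ F₄ ⊢
  simp only [mul_add, add_mul, mul_assoc, p_mul_p_mul, p_mul_q_mul, q_mul_p_mul, q_mul_q_mul,
    mul_zero, add_zero, zero_add] at F₁ F₂ F₃ F₄ ⊢
  linear_combination (norm := noncomm_ring) F₁ + F₂ + F₃ + F₄

lemma map_p_eq_map_one_mul (ha : φ e.p = e.p * φ e.p * e.p) (hb : φ e.q = e.q * φ e.q * e.q) :
    φ e.p = φ 1 * e.p := by
  rw [← e.add_eq_one, map_add, add_mul, hb]
  conv_rhs => rw [ha]
  simpa [mul_assoc] using ha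

end PeircePair

namespace IsJordanDerivableOnOrthogonal

variable {φ : R →+ R}

theorem map_mul_eq_of_peircePair (hφ : IsJordanDerivableOnOrthogonal φ)
    (h2 : ∀ a : R, a + a = 0 → a = 0)
    (hprime : ∀ a b : R, (∀ r : R, a * r * b = 0) → a = 0 ∨ b = 0)
    (e : PeircePair R) (hp0 : e.p ≠ 0) (hq0 : e.q ≠ 0) :
    (∀ r, φ 1 * r = r * φ 1) ∧ ∀ a b, φ (a * b) = φ a * b + a * φ b - a * φ 1 * b := by
  obtain ⟨T, hT⟩ := e.exists_innerDerivation_map_p_eq hφ h2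
  set ψ := φ - innerDerivation T with hψdef
  have hψ : IsJordanDerivableOnOrthogonal ψ := hφ.sub (of_derivation (innerDerivation_mul T))
  have hψ1 : ψ 1 = φ 1 := by simp [hψdef]
  have hcomm : ∀ r, ψ 1 * r = r * ψ 1 := e.map_one_mul_comm hψ h2 hprime hT hp0 hq0
  have hb := e.map_q_eq_of_map_p_eq hψ h2 hT
  set χ := ψ - AddMonoidHom.mulLeft (ψ 1) with hχdef
  have hχ : IsJordanDerivableOnOrthogonal χ := hψ.sub (mulLeft_of_commute hcomm)
  have hψp : ψ e.p = ψ 1 * e.p := e.map_p_eq_map_one_mul hT hb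
  have hψq : ψ e.q = ψ 1 * e.q := e.swap.map_p_eq_map_one_mul hb hT
  have hχp : χ e.p = 0 := by simp [hχdef, ← hψp]
  have hχq : χ e.q = 0 := by simp [hχdef, ← hψq]
  refine ⟨hψ1 ▸ hcomm, fun a b => ?_⟩
  have h := e.map_mul_of_map_eq_zero hχ h2 hprime hχp hχq hp0 hq0 a b
  simp only [hχdef, hψdef, AddMonoidHom.sub_apply, innerDerivation_apply,
    AddMonoidHom.coe_mulLeft] at h
  linear_combination (norm := noncomm_ring) h

end IsJordanDerivableOnOrthogonal

end

theorem prime_ring_decomposition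
    {R : Type*} [Ring R]
    (h2 : ∀ a : R, a + a = 0 → a = 0)
    (hprime : ∀ a b : R, (∀ r : R, a * r * b = 0) → a = 0 ∨ b = 0)
    (P : R) (hP2 : P * P = P) (hP0 : P ≠ 0) (hP1 : P ≠ 1)
    (φ : R →+ R)
    (hcondP : ∀ U V : R, U * V = 0 → V * U = 0 →
      φ U * V + V * φ U + U * φ V + φ V * U = 0) :
    (∃ δ η : R →+ R,
      (∀ a b : R, δ (a * b) = δ a * b + a * δ b) ∧
      (∀ a : R, η a = η 1 * a ∧ η a = a * η 1) ∧
      (∀ a : R, φ a = δ a + η a)) ∧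
    (φ 1 = 0 → ∀ a b : R, φ (a * b) = φ a * b + a * φ b) := by
  let e : PeircePair R := ⟨P, 1 - P, add_sub_cancel P 1, by rw [mul_sub, mul_one, hP2, sub_self]⟩
  obtain ⟨hcomm, hmul⟩ := IsJordanDerivableOnOrthogonal.map_mul_eq_of_peircePair hcondP h2 hprime
    e hP0 (sub_ne_zero.mpr hP1.symm)
  refine ⟨⟨φ - AddMonoidHom.mulLeft (φ 1), AddMonoidHom.mulLeft (φ 1), fun a b => ?_,
      fun a => ⟨by simp, by simp [hcomm a]⟩, fun a => by simp⟩,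
    fun h1 a b => by simpa [h1] using hmul a b⟩
  simp only [AddMonoidHom.sub_apply, AddMonoidHom.coe_mulLeft]
  linear_combination (norm := noncomm_ring) hmul a b
end

section
/- (Theorem 2.11) Let R be a unital ring with an idempotent e (set f = 1 − e) such that f·x·e = 0 for all x ∈ R (the triangular-ring condition, so R is the Pierce form of a triangular ring [[A, M],[0, B]]), such that eRe and fRf are 2-torsion free, and such that eRf is a faithful left eRe-module and a faithful right fRf-module. If φ : R → R is an additive map satisfying condition (P), then there exist a derivation δ : R → R and a multiplier η : R → R such that φ = δ + η. If in addition φ(1) = 0, then φ is a derivation. -/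
set_option maxHeartbeats 1600000 in
theorem triangular_ring_decomposition
    {R : Type*} [Ring R] (e : R) (he : e * e = e)
    (h2A : ∀ x : R, e * x * e + e * x * e = 0 → e * x * e = 0)
    (h2B : ∀ x : R, (1 - e) * x * (1 - e) + (1 - e) * x * (1 - e) = 0 →
      (1 - e) * x * (1 - e) = 0)
    (hlf : ∀ a : R, a = e * a * e → (∀ x : R, a * (e * x * (1 - e)) = 0) → a = 0)
    (hrf : ∀ b : R, b = (1 - e) * b * (1 - e) → (∀ x : R, (e * x * (1 - e)) * b = 0) → b = 0)
    (φ : R →+ R)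
    (hP : ∀ U V : R, U * V = 0 → V * U = 0 →
      φ U * V + V * φ U + U * φ V + φ V * U = 0)
    (htri : ∀ x : R, (1 - e) * x * e = 0) :
    (∃ δ η : R →+ R,
      (∀ a b : R, δ (a * b) = δ a * b + a * δ b) ∧
      (∀ a : R, η a = η 1 * a ∧ η a = a * η 1) ∧
      (∀ a : R, φ a = δ a + η a)) ∧
    (φ 1 = 0 → ∀ a b : R, φ (a * b) = φ a * b + a * φ b) := by
  -- toolkit
  have t5 : e * (1 - e) = 0 := by rw [mul_sub, mul_one, he, sub_self]
  have t6 : (1 - e) * e = 0 := by rw [sub_mul, one_mul, he, sub_self]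
  have t7 : (1 - e) * (1 - e) = 1 - e := by rw [sub_mul, one_mul, mul_sub, mul_one, he]; abel
  have t1 : ∀ t : R, e * (e * t) = e * t := fun t => by rw [← mul_assoc, he]
  have t2 : ∀ t : R, e * ((1 - e) * t) = 0 := fun t => by rw [← mul_assoc, t5, zero_mul]
  have t3 : ∀ t : R, (1 - e) * (e * t) = 0 := fun t => by rw [← mul_assoc, t6, zero_mul]
  have t4 : ∀ t : R, (1 - e) * ((1 - e) * t) = (1 - e) * t := fun t => by rw [← mul_assoc, t7]
  have T1' : ∀ u t : R, (1 - e) * (u * (e * t)) = 0 := fun u t => by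
    rw [← mul_assoc, ← mul_assoc, htri u, zero_mul]
  have T2' : ∀ u : R, (1 - e) * (u * e) = 0 := fun u => by rw [← mul_assoc, htri u]
  have decomp : ∀ u : R, u = e * u * e + e * u * (1 - e) + (1 - e) * u * (1 - e) := by
    intro u
    have h : u = e * u * e + e * u * (1 - e) + (1 - e) * u * e + (1 - e) * u * (1 - e) := by
      noncomm_ring
    rw [htri u, add_zero] at h
    exact h
  -- introduce f
  obtain ⟨f, hf⟩ : ∃ f : R, f = 1 - e := ⟨1 - e, rfl⟩
  rw [← hf] at h2B hlf hrf htri t5 t6 t7 t2 t3 t4 T1' T2' decomp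
  have t8 : f * f = f := t7
  have hef : e + f = 1 := by rw [hf]; abel
  -- structural: f φ(A) f = 0
  have L1 : ∀ x : R, f * φ (e * x * e) * f = 0 := by
    intro x
    have zp1 : (e * x * e) * f = 0 := by
      simp only [mul_assoc, t5, mul_zero]
    have zp2 : f * (e * x * e) = 0 := by
      simp only [mul_assoc, t3]
    have E := hP (e * x * e) f zp1 zp2
    have E2 : f * (φ (e*x*e) * f + f * φ (e*x*e) + (e*x*e) * φ f + φ f * (e*x*e)) * f = 0 := by
      rw [E, mul_zero, zero_mul]
    apply h2B
    rw [← E2]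
    simp only [mul_assoc, mul_one, one_mul, mul_zero, zero_mul, mul_add, add_mul,
      mul_sub, sub_mul, sub_self, add_zero, zero_add, sub_zero, he, t1, t2, t3, t4,
      t5, t6, t8, T1', T2']
  have L2 : ∀ x : R, e * φ (f * x * f) * e = 0 := by
    intro x
    have zp1 : e * (f * x * f) = 0 := by simp only [mul_assoc, t2]
    have zp2 : (f * x * f) * e = 0 := by
      simp only [mul_assoc, t6, mul_zero]
    have E := hP e (f * x * f) zp1 zp2
    have E2 : e * (φ e * (f*x*f) + (f*x*f) * φ e + e * φ (f*x*f) + φ (f*x*f) * e) * e = 0 := by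
      rw [E, mul_zero, zero_mul]
    apply h2A
    rw [← E2]
    simp only [mul_assoc, mul_one, one_mul, mul_zero, zero_mul, mul_add, add_mul,
      mul_sub, sub_mul, sub_self, add_zero, zero_add, sub_zero, he, t1, t2, t3, t4,
      t5, t6, t8, T1', T2']
  have C_a : ∀ x : R, φ (e * x * e) = e * φ (e * x * e) * e + e * φ (e * x * e) * f := by
    intro x
    have h := decomp (φ (e * x * e))
    rw [L1 x, add_zero] at h
    exact h
  have C_b : ∀ x : R, φ (f * x * f) = e * φ (f * x * f) * f + f * φ (f * x * f) * f := by
    intro x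
    have h := decomp (φ (f * x * f))
    rw [L2 x, zero_add] at h
    exact h
  have he1 : e * (1:R) * e = e := by rw [mul_one, he]
  have hf1 : f * (1:R) * f = f := by rw [mul_one, t8]
  have L1e : f * φ e * f = 0 := by have h := L1 1; rwa [he1] at h
  have L2f : e * φ f * e = 0 := by have h := L2 1; rwa [hf1] at h
  have C_e : φ e = e * φ e * e + e * φ e * f := by
    have h := C_a 1; rwa [he1] at h
  have C_f : φ f = e * φ f * f + f * φ f * f := by
    have h := C_b 1; rwa [hf1] at h
  have hsplit : φ 1 = φ e + φ f := by rw [← hef, map_add]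
  have L_c : e * φ 1 * e = e * φ e * e := by
    rw [hsplit, mul_add, add_mul, L2f, add_zero]
  have L_d : f * φ 1 * f = f * φ f * f := by
    rw [hsplit, mul_add, add_mul, L1e, zero_add]
  have L_ab : ∀ x y : R, e * φ (e*x*e) * (f*y*f) + (e*x*e) * (e * φ (f*y*f) * f) = 0 := by
    intro x y
    have zp1 : (e*x*e) * (f*y*f) = 0 := by simp only [mul_assoc, t2, mul_zero]
    have zp2 : (f*y*f) * (e*x*e) = 0 := by simp only [mul_assoc, t3, mul_zero]
    have E := hP (e*x*e) (f*y*f) zp1 zp2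
    have E2 : e * (φ (e*x*e) * (f*y*f) + (f*y*f) * φ (e*x*e) + (e*x*e) * φ (f*y*f)
        + φ (f*y*f) * (e*x*e)) * f = 0 := by rw [E, mul_zero, zero_mul]
    rw [← E2]
    simp only [mul_assoc, mul_one, one_mul, mul_zero, zero_mul, mul_add, add_mul,
      mul_sub, sub_mul, sub_self, add_zero, zero_add, sub_zero, he, t1, t2, t3, t4,
      t5, t6, t8, T1', T2']
  have L6 : ∀ y : R, e * φ (f*y*f) * f = -(e * φ e * (f*y*f)) := by
    intro y
    have h := L_ab 1 y
    rw [he1] at h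
    have h2 : e * (e * φ (f*y*f) * f) = e * φ (f*y*f) * f := by
      simp only [← mul_assoc, he]
    rw [h2, add_comm] at h
    exact eq_neg_of_add_eq_zero_left h
  have L_ezf : e * φ 1 * f = 0 := by
    have h := L6 1
    rw [hf1] at h
    rw [hsplit, mul_add, add_mul, h, mul_assoc, add_neg_cancel]
  have L_eff : e * φ f * f = -(e * φ e * f) := by
    have h := L6 1
    rwa [hf1] at h
  have L5 : ∀ x : R, e * φ (e*x*e) * f = (e*x*e) * (e * φ e * f) := by
    intro x
    have h := L_ab x 1
    rw [hf1, L_eff, mul_neg] at h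
    have h2 : (e*x*e) * (e * φ e * f) = e * φ (e*x*e) * f := by
      rw [add_comm] at h
      have h3 := neg_eq_of_add_eq_zero_left h
      exact (neg_injective h3).symm
    exact h2.symm
  -- pair (a + a*m, f - m), minus pair (a,f), minus pair (a*m, m)
  have TKzp : ∀ (x : R), (e*x*e) * f = 0 := fun x => by
    simp only [mul_assoc, t5, mul_zero]
  have TKzp2 : ∀ (x : R), f * (e*x*e) = 0 := fun x => by
    simp only [mul_assoc, t3]
  have eq3 : ∀ x y : R,
      (φ (e*x*e) + φ (e*x*e*(e*y*f))) * (f - e*y*f)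
      + (f - e*y*f) * (φ (e*x*e) + φ (e*x*e*(e*y*f)))
      + (e*x*e + e*x*e*(e*y*f)) * (φ f - φ (e*y*f))
      + (φ f - φ (e*y*f)) * (e*x*e + e*x*e*(e*y*f))
      - (φ (e*x*e) * f + f * φ (e*x*e) + (e*x*e) * φ f + φ f * (e*x*e))
      + (φ (e*x*e*(e*y*f)) * (e*y*f) + (e*y*f) * φ (e*x*e*(e*y*f))
        + (e*x*e*(e*y*f)) * φ (e*y*f) + φ (e*y*f) * (e*x*e*(e*y*f))) = 0 := by
    intro x y
    have zpA : (e*x*e + e*x*e*(e*y*f)) * (f - e*y*f) = 0 := by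
      simp only [mul_assoc, mul_sub, sub_mul, mul_add, add_mul, t1, t2, t3, t4, t5, t6, t8,
        he, T1', T2', mul_zero, zero_mul, mul_one, one_mul, sub_self, add_zero, zero_add,
        sub_zero, zero_sub, add_neg_cancel, neg_add_cancel]
    have zpB : (f - e*y*f) * (e*x*e + e*x*e*(e*y*f)) = 0 := by
      simp only [mul_assoc, mul_sub, sub_mul, mul_add, add_mul, t1, t2, t3, t4, t5, t6, t8,
        he, T1', T2', mul_zero, zero_mul, mul_one, one_mul, sub_self, add_zero, zero_add,
        sub_zero, zero_sub, add_neg_cancel, neg_add_cancel]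
    have h1 := hP (e*x*e + e*x*e*(e*y*f)) (f - e*y*f) zpA zpB
    rw [map_add, map_sub] at h1
    have h2 := hP (e*x*e) f (TKzp x) (TKzp2 x)
    have zpC : (e*x*e*(e*y*f)) * (e*y*f) = 0 := by
      simp only [mul_assoc, t3, mul_zero]
    have zpD : (e*y*f) * (e*x*e*(e*y*f)) = 0 := by
      simp only [mul_assoc, t3, mul_zero]
    have h3 := hP (e*x*e*(e*y*f)) (e*y*f) zpC zpD
    rw [h1, h2, h3, sub_zero, add_zero]
  have L3' : ∀ x y : R, f * φ (e*x*e*(e*y*f)) * f = 0 := by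
    intro x y
    have hs := congrArg (fun t => f * t * f) (eq3 x y)
    rw [mul_zero, zero_mul] at hs
    apply h2B
    rw [← hs]
    simp only [mul_assoc, mul_one, one_mul, mul_zero, zero_mul, mul_add, add_mul,
      mul_sub, sub_mul, sub_self, add_zero, zero_add, sub_zero, zero_sub, neg_zero,
      neg_add_cancel, add_neg_cancel, neg_mul, mul_neg, neg_neg, he, t1, t2, t3, t4, t5, t6, t8, T1', T2']
    all_goals abel
  have Lq3 : ∀ x y : R, e * φ (e*x*e*(e*y*f)) * f
      = e * φ (e*x*e) * e * (e*y*f) + (e*x*e) * (e * φ (e*y*f) * f)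
        - e*x*e*(e*y*f) * (f * φ f * f) := by
    intro x y
    have hs := congrArg (fun t => e * t * f) (eq3 x y)
    rw [mul_zero, zero_mul] at hs
    rw [C_a x, C_f] at hs
    simp only [mul_assoc, mul_one, one_mul, mul_zero, zero_mul, mul_add, add_mul,
      mul_sub, sub_mul, sub_self, add_zero, zero_add, sub_zero, zero_sub, neg_zero,
      neg_add_cancel, add_neg_cancel, neg_mul, mul_neg, neg_neg, he, t1, t2, t3, t4, t5, t6, t8, T1', T2'] at hs
    rw [← sub_eq_zero]
    rw [← hs]
    simp only [mul_assoc, mul_one, one_mul, mul_zero, zero_mul, mul_add, add_mul,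
      mul_sub, sub_mul, sub_self, add_zero, zero_add, sub_zero, zero_sub, neg_zero,
      neg_add_cancel, add_neg_cancel, neg_mul, mul_neg, neg_neg, he, t1, t2, t3, t4, t5, t6, t8, T1', T2']
    all_goals abel
  -- pair (e - m, b + m*b)
  have eq4 : ∀ x y : R,
      (φ e - φ (e*x*f)) * (f*y*f + e*x*f*(f*y*f))
      + (f*y*f + e*x*f*(f*y*f)) * (φ e - φ (e*x*f))
      + (e - e*x*f) * (φ (f*y*f) + φ (e*x*f*(f*y*f)))
      + (φ (f*y*f) + φ (e*x*f*(f*y*f))) * (e - e*x*f)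
      - (φ e * (f*y*f) + (f*y*f) * φ e + e * φ (f*y*f) + φ (f*y*f) * e)
      + (φ (e*x*f) * (e*x*f*(f*y*f)) + (e*x*f*(f*y*f)) * φ (e*x*f)
        + (e*x*f) * φ (e*x*f*(f*y*f)) + φ (e*x*f*(f*y*f)) * (e*x*f)) = 0 := by
    intro x y
    have zpA : (e - e*x*f) * (f*y*f + e*x*f*(f*y*f)) = 0 := by
      simp only [mul_assoc, mul_one, one_mul, mul_zero, zero_mul, mul_add, add_mul,
      mul_sub, sub_mul, sub_self, add_zero, zero_add, sub_zero, zero_sub, neg_zero,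
      neg_add_cancel, add_neg_cancel, neg_mul, mul_neg, neg_neg, he, t1, t2, t3, t4, t5, t6, t8, T1', T2']
    have zpB : (f*y*f + e*x*f*(f*y*f)) * (e - e*x*f) = 0 := by
      simp only [mul_assoc, mul_one, one_mul, mul_zero, zero_mul, mul_add, add_mul,
      mul_sub, sub_mul, sub_self, add_zero, zero_add, sub_zero, zero_sub, neg_zero,
      neg_add_cancel, add_neg_cancel, neg_mul, mul_neg, neg_neg, he, t1, t2, t3, t4, t5, t6, t8, T1', T2']
    have h1 := hP (e - e*x*f) (f*y*f + e*x*f*(f*y*f)) zpA zpB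
    rw [map_sub, map_add] at h1
    have zpC : e * (f*y*f) = 0 := by simp only [mul_assoc, t2]
    have zpD : (f*y*f) * e = 0 := by simp only [mul_assoc, t6, mul_zero]
    have h2 := hP e (f*y*f) zpC zpD
    have zpE : (e*x*f) * (e*x*f*(f*y*f)) = 0 := by
      simp only [mul_assoc, t3, mul_zero]
    have zpF : (e*x*f*(f*y*f)) * (e*x*f) = 0 := by
      simp only [mul_assoc, t3, mul_zero]
    have h3 := hP (e*x*f) (e*x*f*(f*y*f)) zpE zpF
    rw [h1, h2, h3, sub_zero, add_zero]
  have L4' : ∀ x y : R, e * φ (e*x*f*(f*y*f)) * e = 0 := by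
    intro x y
    have hs := congrArg (fun t => e * t * e) (eq4 x y)
    rw [mul_zero, zero_mul] at hs
    apply h2A
    rw [← hs]
    rw [C_e, C_b y]
    simp only [mul_assoc, mul_one, one_mul, mul_zero, zero_mul, mul_add, add_mul,
      mul_sub, sub_mul, sub_self, add_zero, zero_add, sub_zero, zero_sub, neg_zero,
      neg_add_cancel, add_neg_cancel, neg_mul, mul_neg, neg_neg, he, t1, t2, t3, t4, t5, t6, t8, T1', T2']
    all_goals abel
  have harg1 : ∀ x : R, e*x*f*(f*(1:R)*f) = e*x*f := fun x => by
    rw [hf1, mul_assoc, t8]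
  have harg2 : ∀ y : R, e*(1:R)*e*(e*y*f) = e*y*f := fun y => by
    rw [he1, ← mul_assoc, ← mul_assoc, he]
  have L4 : ∀ x : R, e * φ (e*x*f) * e = 0 := by
    intro x
    have h := L4' x 1
    rwa [harg1 x] at h
  have L3 : ∀ y : R, f * φ (e*y*f) * f = 0 := by
    intro y
    have h := L3' 1 y
    rwa [harg2 y] at h
  have C_m : ∀ x : R, φ (e*x*f) = e * φ (e*x*f) * f := by
    intro x
    have h := decomp (φ (e*x*f))
    rwa [L4 x, L3 x, zero_add, add_zero] at h
  have Lq4 : ∀ x y : R, e * φ (e*x*f*(f*y*f)) * f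
      = e * φ (e*x*f) * f * (f*y*f) + (e*x*f) * (f * φ (f*y*f) * f)
        - e * φ e * e * (e*x*f*(f*y*f)) := by
    intro x y
    have hs := congrArg (fun t => e * t * f) (eq4 x y)
    rw [mul_zero, zero_mul] at hs
    rw [C_e, C_b y] at hs
    simp only [mul_assoc, mul_one, one_mul, mul_zero, zero_mul, mul_add, add_mul,
      mul_sub, sub_mul, sub_self, add_zero, zero_add, sub_zero, zero_sub, neg_zero,
      neg_add_cancel, add_neg_cancel, neg_mul, mul_neg, neg_neg, he, t1, t2, t3, t4, t5, t6, t8, T1', T2'] at hs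
    rw [← sub_eq_zero, ← hs]
    simp only [mul_assoc, mul_one, one_mul, mul_zero, zero_mul, mul_add, add_mul,
      mul_sub, sub_mul, sub_self, add_zero, zero_add, sub_zero, zero_sub, neg_zero,
      neg_add_cancel, add_neg_cancel, neg_mul, mul_neg, neg_neg, he, t1, t2, t3, t4, t5, t6, t8, T1', T2']
    all_goals abel
  -- R4 : c0 * m = m * d0  where c0 = eφ(e)e, d0 = fφ(f)f
  have R4cd : ∀ y : R, e * φ e * e * (e*y*f) = (e*y*f) * (f * φ f * f) := by
    intro y
    have h := Lq3 1 y
    rw [harg2 y, he1] at h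
    have hm2 : e * (e * φ (e*y*f) * f) = e * φ (e*y*f) * f := by
      simp only [← mul_assoc, he]
    rw [hm2] at h
    have h2 := sub_eq_zero_of_eq h
    have h3 : (e*y*f) * (f * φ f * f) - e * φ e * e * (e*y*f) = 0 := by
      rw [← h2]; abel
    exact (sub_eq_zero.mp h3).symm
  -- argument massage lemmas
  have hmb : ∀ w y : R, e*(w*(f*y))*f = e*w*f*(f*y*f) := fun w y => by
    simp only [mul_assoc, t4]
  have ham : ∀ x w : R, e*(x*(e*w))*f = e*x*e*(e*w*f) := fun x w => by
    simp only [mul_assoc, t1]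
  have hamb : ∀ x w y : R, e*(x*(e*(w*(f*y))))*f = e*x*e*(e*w*f*(f*y*f)) := fun x w y => by
    simp only [mul_assoc, t1, t4]
  have haa : ∀ x x' : R, e*(x*(e*x'))*e = e*x*e*(e*x'*e) := fun x x' => by
    simp only [mul_assoc, t1]
  -- O1 : c0 commutes with A
  have O1pre : ∀ x w y : R,
      e * φ e * e * (e*x*e) * (e*w*f*(f*y*f)) - (e*x*e) * (e * φ e * e) * (e*w*f*(f*y*f)) = 0 := by
    intro x w y
    have G1' := Lq3 x (w*(f*y))
    rw [hmb w y] at G1'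
    have G1 := sub_eq_zero_of_eq G1'
    have G2 := sub_eq_zero_of_eq (Lq4 w y)
    have G3' := Lq4 (x*(e*w)) y
    rw [ham x w, mul_assoc (e*x*e) (e*w*f) (f*y*f)] at G3'
    have G3 := sub_eq_zero_of_eq G3'
    have G4 := sub_eq_zero_of_eq (Lq3 x w)
    have G5' := R4cd (x*(e*w))
    rw [ham x w] at G5'
    have G5 := sub_eq_zero_of_eq G5'
    have G6' := R4cd (x*(e*(w*(f*y))))
    rw [hamb x w y] at G6'
    have G6 := sub_eq_zero_of_eq G6'
    have combo : e * φ e * e * (e*x*e) * (e*w*f*(f*y*f)) - (e*x*e) * (e * φ e * e) * (e*w*f*(f*y*f))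
        = -((e * φ (e*x*e*(e*w*f*(f*y*f))) * f - (e * φ (e*x*e) * e * (e*w*f*(f*y*f)) + (e*x*e) * (e * φ (e*w*f*(f*y*f)) * f) - e*x*e*(e*w*f*(f*y*f)) * (f * φ f * f))) + (e*x*e) * (e * φ (e*w*f*(f*y*f)) * f - (e * φ (e*w*f) * f * (f*y*f) + (e*w*f) * (f * φ (f*y*f) * f) - e * φ e * e * (e*w*f*(f*y*f)))) - (e * φ (e*x*e*(e*w*f*(f*y*f))) * f - (e * φ (e*x*e*(e*w*f)) * f * (f*y*f) + (e*x*e*(e*w*f)) * (f * φ (f*y*f) * f) - e * φ e * e * (e*x*e*(e*w*f*(f*y*f))))) - (e * φ (e*x*e*(e*w*f)) * f - (e * φ (e*x*e) * e * (e*w*f) + (e*x*e) * (e * φ (e*w*f) * f) - e*x*e*(e*w*f) * (f * φ f * f))) * (f*y*f) - (e * φ e * e * (e*x*e*(e*w*f)) - (e*x*e*(e*w*f)) * (f * φ f * f)) * (f*y*f) + (e * φ e * e * (e*x*e*(e*w*f*(f*y*f))) - (e*x*e*(e*w*f*(f*y*f))) * (f * φ f * f))) := by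
      noncomm_ring
    rw [G1, G2, G3, G4, G5, G6] at combo
    simpa using combo
  have O1 : ∀ x : R, e * φ e * e * (e*x*e) = (e*x*e) * (e * φ e * e) := by
    intro x
    apply sub_eq_zero.mp
    apply hlf
    · rw [← sub_eq_zero]
      simp only [mul_assoc, mul_one, one_mul, mul_zero, zero_mul, mul_add, add_mul,
      mul_sub, sub_mul, sub_self, add_zero, zero_add, sub_zero, zero_sub, neg_zero,
      neg_add_cancel, add_neg_cancel, neg_mul, mul_neg, neg_neg, he, t1, t2, t3, t4, t5, t6, t8, T1', T2']
      all_goals abel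
    · intro w
      have inst := O1pre x w 1
      rw [harg1 w] at inst
      rw [sub_mul]
      exact sub_eq_zero.mpr (sub_eq_zero.mp inst)
  have O2 : ∀ y : R, f * φ f * f * (f*y*f) = (f*y*f) * (f * φ f * f) := by
    intro y
    apply sub_eq_zero.mp
    apply hrf
    · rw [← sub_eq_zero]
      simp only [mul_assoc, mul_one, one_mul, mul_zero, zero_mul, mul_add, add_mul,
      mul_sub, sub_mul, sub_self, add_zero, zero_add, sub_zero, zero_sub, neg_zero,
      neg_add_cancel, add_neg_cancel, neg_mul, mul_neg, neg_neg, he, t1, t2, t3, t4, t5, t6, t8, T1', T2']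
      all_goals abel
    · intro x
      have G5 := sub_eq_zero_of_eq (R4cd x)
      have G6' := R4cd (x*(f*y))
      rw [hmb x y] at G6'
      have G6 := sub_eq_zero_of_eq G6'
      have combo : e*x*f * (f * φ f * f * (f*y*f) - (f*y*f) * (f * φ f * f))
          = -((e * φ e * e * (e*x*f) - (e*x*f) * (f * φ f * f)) * (f*y*f))
            + (e * φ e * e * (e*x*f*(f*y*f)) - (e*x*f*(f*y*f)) * (f * φ f * f)) := by noncomm_ring
      rw [G5, G6] at combo
      simpa using combo
  have hbb : ∀ y y' : R, f*(y*(f*y'))*f = f*y*f*(f*y'*f) := fun y y' => by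
    simp only [mul_assoc, t4]
  have O4 : ∀ y y' : R, f * φ (f*y*f*(f*y'*f)) * f + (f * φ f * f) * (f*y*f*(f*y'*f))
      = f * φ (f*y*f) * f * (f*y'*f) + (f*y*f) * (f * φ (f*y'*f) * f) := by
    intro y y'
    apply sub_eq_zero.mp
    apply hrf
    · rw [← sub_eq_zero]
      simp only [mul_assoc, mul_one, one_mul, mul_zero, zero_mul, mul_add, add_mul,
      mul_sub, sub_mul, sub_self, add_zero, zero_add, sub_zero, zero_sub, neg_zero,
      neg_add_cancel, add_neg_cancel, neg_mul, mul_neg, neg_neg, he, t1, t2, t3, t4, t5, t6, t8, T1', T2']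
      all_goals abel
    · intro x
      have SK1 := sub_eq_zero_of_eq (Lq4 x y)
      have SK2' := Lq4 (x*(f*y)) y'
      rw [hmb x y, mul_assoc (e*x*f) (f*y*f) (f*y'*f)] at SK2'
      have SK2 := sub_eq_zero_of_eq SK2'
      have SK3' := Lq4 x (y*(f*y'))
      rw [hbb y y'] at SK3'
      have SK3 := sub_eq_zero_of_eq SK3'
      have SG6' := R4cd (x*(f*y))
      rw [hmb x y] at SG6'
      have SG6 := sub_eq_zero_of_eq SG6'
      have SGO2 := sub_eq_zero_of_eq (O2 y)
      have combo : e*x*f * (f * φ (f*y*f*(f*y'*f)) * f + (f * φ f * f) * (f*y*f*(f*y'*f))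
            - (f * φ (f*y*f) * f * (f*y'*f) + (f*y*f) * (f * φ (f*y'*f) * f)))
          = -((e * φ (e*x*f*(f*y*f*(f*y'*f))) * f
                - (e * φ (e*x*f) * f * (f*y*f*(f*y'*f)) + (e*x*f) * (f * φ (f*y*f*(f*y'*f)) * f)
                  - e * φ e * e * (e*x*f*(f*y*f*(f*y'*f)))))
              - (e * φ (e*x*f*(f*y*f*(f*y'*f))) * f
                - (e * φ (e*x*f*(f*y*f)) * f * (f*y'*f) + (e*x*f*(f*y*f)) * (f * φ (f*y'*f) * f)
                  - e * φ e * e * (e*x*f*(f*y*f*(f*y'*f)))))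
              - (e * φ (e*x*f*(f*y*f)) * f
                - (e * φ (e*x*f) * f * (f*y*f) + (e*x*f) * (f * φ (f*y*f) * f)
                  - e * φ e * e * (e*x*f*(f*y*f)))) * (f*y'*f)
              + (e * φ e * e * (e*x*f*(f*y*f)) - (e*x*f*(f*y*f)) * (f * φ f * f)) * (f*y'*f)
              - e*x*f * ((f * φ f * f) * (f*y*f) - (f*y*f) * (f * φ f * f)) * (f*y'*f)) := by noncomm_ring
      rw [SK3, SK2, SK1, SG6, SGO2] at combo
      simpa using combo
  have O3 : ∀ x x' : R, e * φ (e*x*e*(e*x'*e)) * e + (e * φ e * e) * (e*x*e*(e*x'*e))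
      = e * φ (e*x*e) * e * (e*x'*e) + (e*x*e) * (e * φ (e*x'*e) * e) := by
    intro x x'
    apply sub_eq_zero.mp
    apply hlf
    · rw [← sub_eq_zero]
      simp only [mul_assoc, mul_one, one_mul, mul_zero, zero_mul, mul_add, add_mul,
      mul_sub, sub_mul, sub_self, add_zero, zero_add, sub_zero, zero_sub, neg_zero,
      neg_add_cancel, add_neg_cancel, neg_mul, mul_neg, neg_neg, he, t1, t2, t3, t4, t5, t6, t8, T1', T2']
      all_goals abel
    · intro w
      have SJ1' := Lq3 x (x'*(e*w))
      rw [ham x' w] at SJ1'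
      have SJ1 := sub_eq_zero_of_eq SJ1'
      have SJ2 := sub_eq_zero_of_eq (Lq3 x' w)
      have SJ3' := Lq3 (x*(e*x')) w
      rw [haa x x', mul_assoc (e*x*e) (e*x'*e) (e*w*f)] at SJ3'
      have SJ3 := sub_eq_zero_of_eq SJ3'
      have SR4' := R4cd (x'*(e*w))
      rw [ham x' w] at SR4'
      have SR4 := sub_eq_zero_of_eq SR4'
      have SO1 := sub_eq_zero_of_eq (O1 x)
      have combo : (e * φ (e*x*e*(e*x'*e)) * e + (e * φ e * e) * (e*x*e*(e*x'*e))
            - (e * φ (e*x*e) * e * (e*x'*e) + (e*x*e) * (e * φ (e*x'*e) * e))) * (e*w*f)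
          = (e * φ (e*x*e*(e*x'*e*(e*w*f))) * f
              - (e * φ (e*x*e) * e * (e*x'*e*(e*w*f)) + (e*x*e) * (e * φ (e*x'*e*(e*w*f)) * f)
                - e*x*e*(e*x'*e*(e*w*f)) * (f * φ f * f)))
            + (e*x*e) * (e * φ (e*x'*e*(e*w*f)) * f
              - (e * φ (e*x'*e) * e * (e*w*f) + (e*x'*e) * (e * φ (e*w*f) * f)
                - e*x'*e*(e*w*f) * (f * φ f * f)))
            - (e * φ (e*x*e*(e*x'*e*(e*w*f))) * f
              - (e * φ (e*x*e*(e*x'*e)) * e * (e*w*f) + (e*x*e*(e*x'*e)) * (e * φ (e*w*f) * f)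
                - e*x*e*(e*x'*e*(e*w*f)) * (f * φ f * f)))
            + (e*x*e) * (e * φ e * e * (e*x'*e*(e*w*f)) - (e*x'*e*(e*w*f)) * (f * φ f * f))
            + (e * φ e * e * (e*x*e) - (e*x*e) * (e * φ e * e)) * (e*x'*e*(e*w*f)) := by noncomm_ring
      rw [SJ1, SJ2, SJ3, SR4, SO1] at combo
      simpa using combo
  have hzd : φ 1 = e * φ e * e + f * φ f * f := by
    have h := decomp (φ 1)
    rw [L_ezf, add_zero, L_c, L_d] at h
    exact h
  have T1c : ∀ u : R, φ 1 * u = u * φ 1 := by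
    intro u
    have expand1 : (e * φ e * e + f * φ f * f) * (e*u*e + e*u*f + f*u*f)
        = e * φ e * e * (e*u*e) + e * φ e * e * (e*u*f) + f * φ f * f * (f*u*f) := by
      simp only [mul_assoc, mul_one, one_mul, mul_zero, zero_mul, mul_add, add_mul,
      mul_sub, sub_mul, sub_self, add_zero, zero_add, sub_zero, zero_sub, neg_zero,
      neg_add_cancel, add_neg_cancel, neg_mul, mul_neg, neg_neg, he, t1, t2, t3, t4, t5, t6, t8, T1', T2']
      all_goals abel
    have expand2 : (e*u*e + e*u*f + f*u*f) * (e * φ e * e + f * φ f * f)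
        = (e*u*e) * (e * φ e * e) + (e*u*f) * (f * φ f * f) + (f*u*f) * (f * φ f * f) := by
      simp only [mul_assoc, mul_one, one_mul, mul_zero, zero_mul, mul_add, add_mul,
      mul_sub, sub_mul, sub_self, add_zero, zero_add, sub_zero, zero_sub, neg_zero,
      neg_add_cancel, add_neg_cancel, neg_mul, mul_neg, neg_neg, he, t1, t2, t3, t4, t5, t6, t8, T1', T2']
      all_goals abel
    rw [hzd]
    conv_lhs => rw [decomp u]
    conv_rhs => rw [decomp u]
    rw [expand1, expand2, O1 u, R4cd u, O2 u]
  -- nine corner cases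
  have caseaa : ∀ x y : R, φ (e*x*e*(e*y*e))
      = φ (e*x*e) * (e*y*e) + (e*x*e) * φ (e*y*e) - φ 1 * (e*x*e*(e*y*e)) := by
    intro x y
    have hCP : φ (e*x*e*(e*y*e)) = e * φ (e*x*e*(e*y*e)) * e + e * φ (e*x*e*(e*y*e)) * f := by
      have h := C_a (x*(e*y)); rwa [haa x y] at h
    have hL5P : e * φ (e*x*e*(e*y*e)) * f = e*x*e*(e*y*e) * (e * φ e * f) := by
      have h := L5 (x*(e*y)); rwa [haa x y] at h
    have SO3 := sub_eq_zero_of_eq (O3 x y)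
    rw [hCP, hL5P, C_a x, C_a y, L5 x, L5 y, hzd, ← sub_eq_zero, SO3.symm]
    simp only [mul_assoc, mul_one, one_mul, mul_zero, zero_mul, mul_add, add_mul,
      mul_sub, sub_mul, sub_self, add_zero, zero_add, sub_zero, zero_sub, neg_zero,
      neg_add_cancel, add_neg_cancel, neg_mul, mul_neg, neg_neg, he, t1, t2, t3, t4, t5, t6, t8, T1', T2']
    all_goals abel
  have caseam : ∀ x y : R, φ (e*x*e*(e*y*f))
      = φ (e*x*e) * (e*y*f) + (e*x*e) * φ (e*y*f) - φ 1 * (e*x*e*(e*y*f)) := by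
    intro x y
    have hCam : φ (e*x*e*(e*y*f)) = e * φ (e*x*e*(e*y*f)) * f := by
      have h := C_m (x*(e*y)); rwa [ham x y] at h
    have S1 := sub_eq_zero_of_eq (Lq3 x y)
    have S2' := R4cd (x*(e*y))
    rw [ham x y] at S2'
    have S2 := sub_eq_zero_of_eq S2'
    have hsum := congrArg₂ (· + ·) S1 S2
    simp only [add_zero] at hsum
    rw [hCam, C_a x, C_m y, L5 x, hzd, ← sub_eq_zero, hsum.symm]
    simp only [mul_assoc, mul_one, one_mul, mul_zero, zero_mul, mul_add, add_mul,
      mul_sub, sub_mul, sub_self, add_zero, zero_add, sub_zero, zero_sub, neg_zero,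
      neg_add_cancel, add_neg_cancel, neg_mul, mul_neg, neg_neg, he, t1, t2, t3, t4, t5, t6, t8, T1', T2']
    all_goals abel
  have caseab : ∀ x y : R, φ (e*x*e*(f*y*f))
      = φ (e*x*e) * (f*y*f) + (e*x*e) * φ (f*y*f) - φ 1 * (e*x*e*(f*y*f)) := by
    intro x y
    have hz : e*x*e*(f*y*f) = 0 := by
      simp only [mul_assoc, t2, mul_zero]
    rw [hz, map_zero, mul_zero, C_a x, L5 x, C_b y, L6 y]
    simp only [mul_assoc, mul_one, one_mul, mul_zero, zero_mul, mul_add, add_mul,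
      mul_sub, sub_mul, sub_self, add_zero, zero_add, sub_zero, zero_sub, neg_zero,
      neg_add_cancel, add_neg_cancel, neg_mul, mul_neg, neg_neg, he, t1, t2, t3, t4, t5, t6, t8, T1', T2']
    all_goals abel
  have casema : ∀ x y : R, φ (e*x*f*(e*y*e))
      = φ (e*x*f) * (e*y*e) + (e*x*f) * φ (e*y*e) - φ 1 * (e*x*f*(e*y*e)) := by
    intro x y
    have hz : e*x*f*(e*y*e) = 0 := by
      simp only [mul_assoc, t3, mul_zero]
    rw [hz, map_zero, mul_zero, C_m x, C_a y, L5 y]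
    simp only [mul_assoc, mul_one, one_mul, mul_zero, zero_mul, mul_add, add_mul,
      mul_sub, sub_mul, sub_self, add_zero, zero_add, sub_zero, zero_sub, neg_zero,
      neg_add_cancel, add_neg_cancel, neg_mul, mul_neg, neg_neg, he, t1, t2, t3, t4, t5, t6, t8, T1', T2']
    all_goals abel
  have casemm : ∀ x y : R, φ (e*x*f*(e*y*f))
      = φ (e*x*f) * (e*y*f) + (e*x*f) * φ (e*y*f) - φ 1 * (e*x*f*(e*y*f)) := by
    intro x y
    have hz : e*x*f*(e*y*f) = 0 := by
      simp only [mul_assoc, t3, mul_zero]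
    rw [hz, map_zero, mul_zero, C_m x, C_m y]
    simp only [mul_assoc, mul_one, one_mul, mul_zero, zero_mul, mul_add, add_mul,
      mul_sub, sub_mul, sub_self, add_zero, zero_add, sub_zero, zero_sub, neg_zero,
      neg_add_cancel, add_neg_cancel, neg_mul, mul_neg, neg_neg, he, t1, t2, t3, t4, t5, t6, t8, T1', T2']
    all_goals abel
  have casemb : ∀ x y : R, φ (e*x*f*(f*y*f))
      = φ (e*x*f) * (f*y*f) + (e*x*f) * φ (f*y*f) - φ 1 * (e*x*f*(f*y*f)) := by
    intro x y
    have hCmb : φ (e*x*f*(f*y*f)) = e * φ (e*x*f*(f*y*f)) * f := by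
      have h := C_m (x*(f*y)); rwa [hmb x y] at h
    have S1 := sub_eq_zero_of_eq (Lq4 x y)
    rw [hCmb, C_m x, C_b y, hzd, ← sub_eq_zero, S1.symm]
    simp only [mul_assoc, mul_one, one_mul, mul_zero, zero_mul, mul_add, add_mul,
      mul_sub, sub_mul, sub_self, add_zero, zero_add, sub_zero, zero_sub, neg_zero,
      neg_add_cancel, add_neg_cancel, neg_mul, mul_neg, neg_neg, he, t1, t2, t3, t4, t5, t6, t8, T1', T2']
    all_goals abel
  have caseba : ∀ x y : R, φ (f*x*f*(e*y*e))
      = φ (f*x*f) * (e*y*e) + (f*x*f) * φ (e*y*e) - φ 1 * (f*x*f*(e*y*e)) := by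
    intro x y
    have hz : f*x*f*(e*y*e) = 0 := by
      simp only [mul_assoc, t3, mul_zero]
    rw [hz, map_zero, mul_zero, C_b x, C_a y, L5 y]
    simp only [mul_assoc, mul_one, one_mul, mul_zero, zero_mul, mul_add, add_mul,
      mul_sub, sub_mul, sub_self, add_zero, zero_add, sub_zero, zero_sub, neg_zero,
      neg_add_cancel, add_neg_cancel, neg_mul, mul_neg, neg_neg, he, t1, t2, t3, t4, t5, t6, t8, T1', T2']
    all_goals abel
  have casebm : ∀ x y : R, φ (f*x*f*(e*y*f))
      = φ (f*x*f) * (e*y*f) + (f*x*f) * φ (e*y*f) - φ 1 * (f*x*f*(e*y*f)) := by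
    intro x y
    have hz : f*x*f*(e*y*f) = 0 := by
      simp only [mul_assoc, t3, mul_zero]
    rw [hz, map_zero, mul_zero, C_b x, C_m y]
    simp only [mul_assoc, mul_one, one_mul, mul_zero, zero_mul, mul_add, add_mul,
      mul_sub, sub_mul, sub_self, add_zero, zero_add, sub_zero, zero_sub, neg_zero,
      neg_add_cancel, add_neg_cancel, neg_mul, mul_neg, neg_neg, he, t1, t2, t3, t4, t5, t6, t8, T1', T2']
    all_goals abel
  have casebb : ∀ x y : R, φ (f*x*f*(f*y*f))
      = φ (f*x*f) * (f*y*f) + (f*x*f) * φ (f*y*f) - φ 1 * (f*x*f*(f*y*f)) := by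
    intro x y
    have hCbb : φ (f*x*f*(f*y*f)) = e * φ (f*x*f*(f*y*f)) * f + f * φ (f*x*f*(f*y*f)) * f := by
      have h := C_b (x*(f*y)); rwa [hbb x y] at h
    have hnu : e * φ (f*x*f*(f*y*f)) * f = -(e * φ e * (f*x*f*(f*y*f))) := by
      have h := L6 (x*(f*y)); rwa [hbb x y] at h
    have SO4 := sub_eq_zero_of_eq (O4 x y)
    rw [hCbb, hnu, C_b x, C_b y, L6 x, L6 y, hzd, ← sub_eq_zero, SO4.symm]
    simp only [mul_assoc, mul_one, one_mul, mul_zero, zero_mul, mul_add, add_mul,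
      mul_sub, sub_mul, sub_self, add_zero, zero_add, sub_zero, zero_sub, neg_zero,
      neg_add_cancel, add_neg_cancel, neg_mul, mul_neg, neg_neg, he, t1, t2, t3, t4, t5, t6, t8, T1', T2']
    all_goals abel
  have T2 : ∀ u v : R, φ (u * v) = φ u * v + u * φ v - φ 1 * (u * v) := by
    intro u v
    conv_lhs => rw [decomp u, decomp v]
    conv_rhs => rw [decomp u, decomp v]
    simp only [mul_add, add_mul, map_add]
    rw [caseaa u v, caseam u v, caseab u v, casema u v, casemm u v, casemb u v,
      caseba u v, casebm u v, casebb u v]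
    noncomm_ring
  constructor
  · refine ⟨φ - AddMonoidHom.mulLeft (φ 1), AddMonoidHom.mulLeft (φ 1), ?_, ?_, ?_⟩
    · intro a b
      simp only [AddMonoidHom.sub_apply, AddMonoidHom.coe_mulLeft]
      rw [T2 a b]
      have hc : a * (φ 1 * b) = φ 1 * (a * b) := by
        rw [← mul_assoc, ← T1c a, mul_assoc]
      rw [mul_sub, sub_mul, hc]
      noncomm_ring
    · intro a
      simp only [AddMonoidHom.coe_mulLeft, mul_one]
      exact ⟨trivial, T1c a⟩
    · intro a
      simp only [AddMonoidHom.sub_apply, AddMonoidHom.coe_mulLeft]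
      abel
  · intro h1 a b
    rw [T2 a b, h1, zero_mul, sub_zero]
end
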